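/- Every graph G satisfies α_2(G) ≥ Σ_{v∈V(G)} min{1, 2/(d(v)+1)}, where α_2(G) is the maximum number of vertices of an induced forest in G and d(v) denotes vertex degree. -/

import Mathlib

/-!
Order the vertices by a bijection `σ : V ≃ Fin n` and keep the vertices with at most one
earlier neighbour. They induce a forest: on a cycle, the vertex that comes last has two earlier
neighbours. A vertex `v` is kept iff it is among the first two vertices of its closed
neighbourhood `N[v]`; swapping two vertices of `N[v]` shows that every position in `N[v]` is
taken by `v` equally often, so `v` is kept by exactly a `min 1 (2 / (d(v) + 1))` fraction of the
orderings. Averaging over all orderings gives one that keeps at least the sum of these fractions.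
-/

open Finset SimpleGraph

section Rank

variable {V : Type*} {n : ℕ}

def rankIn (σ : V ≃ Fin n) (T : Finset V) (u : V) : ℕ := #{w ∈ T | σ w < σ u}

variable {σ : V ≃ Fin n} {T : Finset V} {u v : V}

theorem rankIn_lt_card (hu : u ∈ T) : rankIn σ T u < #T :=
  card_lt_card <| filter_ssubset.2 ⟨u, hu, lt_irrefl _⟩

theorem rankIn_lt_rankIn (hu : u ∈ T) (h : σ u < σ v) : rankIn σ T u < rankIn σ T v := by
  refine card_lt_card <| (ssubset_iff_of_subset fun w hw => ?_).2 ⟨u, ?_, ?_⟩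
  · rw [mem_filter] at hw ⊢
    exact ⟨hw.1, hw.2.trans h⟩
  · exact mem_filter.2 ⟨hu, h⟩
  · simp

theorem rankIn_injOn : Set.InjOn (rankIn σ T) T := by
  intro u hu v hv huv
  rcases lt_trichotomy (σ u) (σ v) with h | h | h
  · exact absurd huv (rankIn_lt_rankIn hu h).ne
  · exact σ.injective h
  · exact absurd huv (rankIn_lt_rankIn hv h).ne'

theorem card_filter_rankIn_eq_one {j : ℕ} (hj : j < #T) : #{u ∈ T | rankIn σ T u = j} = 1 := by
  have himage : T.image (rankIn σ T) = range #T :=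
    eq_of_subset_of_card_le
      (fun _ hi => by
        obtain ⟨u, hu, rfl⟩ := mem_image.1 hi
        exact mem_range.2 (rankIn_lt_card hu))
      (by rw [card_range, card_image_of_injOn rankIn_injOn])
  obtain ⟨u, hu, rfl⟩ := mem_image.1 (himage ▸ mem_range.2 hj)
  refine card_eq_one.2 ⟨u, ext fun w => ?_⟩
  simp only [mem_filter, mem_singleton]
  exact ⟨fun hw => rankIn_injOn hw.1 hu hw.2, by rintro rfl; exact ⟨hu, rfl⟩⟩

variable [DecidableEq V]

theorem rankIn_swap_trans (hu : u ∈ T) (hv : v ∈ T) :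
    rankIn ((Equiv.swap u v).trans σ) T v = rankIn σ T u := by
  have hT : ∀ w, Equiv.swap u v w ∈ T ↔ w ∈ T := fun w => by
    rw [Equiv.swap_apply_def]
    split_ifs <;> simp_all
  refine card_equiv (Equiv.swap u v) fun w => ?_
  simp [hT]

variable [Fintype V]

theorem card_filter_rankIn_eq_eq_of_mem (hu : u ∈ T) (hv : v ∈ T) (j : ℕ) :
    #{σ : V ≃ Fin n | rankIn σ T u = j} = #{σ : V ≃ Fin n | rankIn σ T v = j} :=
  card_nbij' ((Equiv.swap u v).trans ·) ((Equiv.swap u v).trans ·)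
    (fun σ hσ => by simpa [rankIn_swap_trans hu hv] using hσ)
    (fun σ hσ => by simpa [Equiv.swap_comm u v, rankIn_swap_trans hv hu] using hσ)
    (fun σ _ => by ext; simp) (fun σ _ => by ext; simp)

theorem card_mul_card_filter_rankIn_eq (hv : v ∈ T) {j : ℕ} (hj : j < #T) :
    #T * #{σ : V ≃ Fin n | rankIn σ T v = j} = Fintype.card (V ≃ Fin n) := calc
  #T * #{σ : V ≃ Fin n | rankIn σ T v = j}
      = ∑ u ∈ T, #{σ : V ≃ Fin n | rankIn σ T u = j} := by
    rw [sum_congr rfl fun u hu => card_filter_rankIn_eq_eq_of_mem hu hv j, sum_const, smul_eq_mul]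
  _ = ∑ σ : V ≃ Fin n, #{u ∈ T | rankIn σ T u = j} := by
    simp only [card_filter]
    exact sum_comm
  _ = Fintype.card (V ≃ Fin n) := by simp [card_filter_rankIn_eq_one hj]

theorem card_mul_card_filter_rankIn_lt (hv : v ∈ T) {k : ℕ} (hk : k ≤ #T) :
    #T * #{σ : V ≃ Fin n | rankIn σ T v < k} = k * Fintype.card (V ≃ Fin n) := by
  rw [card_eq_sum_card_fiberwise (f := (rankIn · T v)) (t := range k)
      (fun σ hσ => by simpa using hσ),
    mul_sum, sum_congr rfl fun j hj => ?_, sum_const, card_range, smul_eq_mul]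
  rw [filter_filter, ← card_mul_card_filter_rankIn_eq hv ((mem_range.1 hj).trans_le hk)]
  congr 2
  ext σ
  simp only [mem_filter, mem_univ, true_and, and_iff_right_iff_imp]
  rintro rfl
  exact mem_range.1 hj

end Rank

namespace SimpleGraph

variable {W α : Type*} [LinearOrder α]

theorem isAcyclic_of_injective_of_lower_adj_eq {H : SimpleGraph W} {f : W → α}
    (hf : Function.Injective f)
    (h : ∀ v a b, H.Adj v a → H.Adj v b → f a < f v → f b < f v → a = b) :
    H.IsAcyclic := by
  classical
  intro x p hp
  obtain ⟨u, hu, hmax⟩ := p.support.toFinset.exists_max_image f ⟨x, by simp⟩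
  rw [List.mem_toFinset] at hu
  set c := p.rotate u hu
  have hc : c.IsCycle := hp.rotate hu
  have lt_of_adj : ∀ i, H.Adj u (c.getVert i) → f (c.getVert i) < f u := fun i hadj =>
    (hmax _ <| List.mem_toFinset.2 <|
      (p.mem_support_rotate_iff u hu).1 (c.getVert_mem_support i)).lt_of_ne
        fun e => hadj.ne (hf e).symm
  have hsnd := c.adj_snd hc.not_nil
  have hpen := (c.adj_penultimate hc.not_nil).symm
  exact hc.snd_ne_penultimate (h u _ _ hsnd hpen (lt_of_adj 1 hsnd) (lt_of_adj _ hpen))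

variable {V : Type*} (G : SimpleGraph V) [Fintype V] [DecidableRel G.Adj] {n : ℕ}

def lowerNeighborFinset (σ : V ≃ Fin n) (v : V) : Finset V :=
  {w ∈ G.neighborFinset v | σ w < σ v}

def fewLowerNeighborsFinset (σ : V ≃ Fin n) : Finset V :=
  {v | #(G.lowerNeighborFinset σ v) ≤ 1}

theorem isAcyclic_induce_fewLowerNeighborsFinset (σ : V ≃ Fin n) :
    (G.induce (G.fewLowerNeighborsFinset σ : Set V)).IsAcyclic := by
  refine isAcyclic_of_injective_of_lower_adj_eq (f := fun v => σ v.1)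
    (σ.injective.comp Subtype.val_injective) fun v a b hva hvb hav hbv => Subtype.ext ?_
  have hv : #(G.lowerNeighborFinset σ v) ≤ 1 := by simpa [fewLowerNeighborsFinset] using v.2
  exact card_le_one.1 hv _ (by simpa [lowerNeighborFinset] using ⟨hva, hav⟩) _
    (by simpa [lowerNeighborFinset] using ⟨hvb, hbv⟩)

variable [DecidableEq V]

def closedNeighborFinset (v : V) : Finset V := insert v (G.neighborFinset v)

theorem mem_closedNeighborFinset_self (v : V) : v ∈ G.closedNeighborFinset v :=
  mem_insert_self v _

theorem card_closedNeighborFinset (v : V) : #(G.closedNeighborFinset v) = G.degree v + 1 := by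
  rw [closedNeighborFinset, card_insert_of_notMem (notMem_neighborFinset_self G v),
    card_neighborFinset_eq_degree]

theorem card_lowerNeighborFinset (σ : V ≃ Fin n) (v : V) :
    #(G.lowerNeighborFinset σ v) = rankIn σ (G.closedNeighborFinset v) v := by
  rw [rankIn, closedNeighborFinset, filter_insert, if_neg (lt_irrefl _), lowerNeighborFinset]

theorem card_filter_mem_fewLowerNeighborsFinset (v : V) :
    (#{σ : V ≃ Fin n | v ∈ G.fewLowerNeighborsFinset σ} : ℝ) =
      Fintype.card (V ≃ Fin n) * min (1 : ℝ) (2 / (G.degree v + 1)) := by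
  have hv := G.mem_closedNeighborFinset_self v
  have hfilter : #{σ : V ≃ Fin n | v ∈ G.fewLowerNeighborsFinset σ} =
      #{σ : V ≃ Fin n | rankIn σ (G.closedNeighborFinset v) v < min 2 (G.degree v + 1)} := by
    congr 1
    ext σ
    have := G.card_closedNeighborFinset v ▸ rankIn_lt_card (σ := σ) hv
    simp only [fewLowerNeighborsFinset, card_lowerNeighborFinset, mem_filter, mem_univ, true_and]
    omega
  have hcount := G.card_closedNeighborFinset v ▸ card_mul_card_filter_rankIn_lt (n := n) hv
    (G.card_closedNeighborFinset v ▸ min_le_right 2 (G.degree v + 1))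
  have hmin : min (1 : ℝ) (2 / (G.degree v + 1)) =
      min (2 : ℝ) (G.degree v + 1) / (G.degree v + 1) := by
    rw [← min_div_div_right (by positivity), div_self (by positivity), min_comm]
  rw [hfilter, hmin, mul_div_assoc', eq_div_iff (by positivity)]
  norm_cast
  rw [mul_comm, hcount, mul_comm]

end SimpleGraph

/-- Alon–Kahn–Seymour bound: every graph `G` has an induced forest on at least
`Σ_{v ∈ V(G)} min {1, 2/(d(v)+1)}` vertices, i.e.
`α₂(G) ≥ Σ_v min {1, 2/(d(v)+1)}`. -/
theorem stmt_8 {V : Type} [Fintype V] (G : SimpleGraph V) [DecidableRel G.Adj] :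
    ∃ S : Finset V, (G.induce (S : Set V)).IsAcyclic ∧
      ∑ v : V, min (1 : ℝ) (2 / (G.degree v + 1)) ≤ S.card := by
  classical
  have hdouble : ∑ σ : V ≃ Fin (Fintype.card V), #(G.fewLowerNeighborsFinset σ) =
      ∑ v, #{σ : V ≃ Fin (Fintype.card V) | v ∈ G.fewLowerNeighborsFinset σ} := by
    simp only [card_filter, fewLowerNeighborsFinset, mem_filter, mem_univ, true_and]
    exact sum_comm
  have haverage :
      ∑ _σ : V ≃ Fin (Fintype.card V), ∑ v, min (1 : ℝ) (2 / (G.degree v + 1)) =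
      ∑ σ : V ≃ Fin (Fintype.card V), (#(G.fewLowerNeighborsFinset σ) : ℝ) := by
    rw [sum_const, card_univ, nsmul_eq_mul, mul_sum]
    simp only [← card_filter_mem_fewLowerNeighborsFinset]
    exact_mod_cast hdouble.symm
  obtain ⟨σ, -, hσ⟩ := exists_le_of_sum_le ⟨Fintype.equivFin V, mem_univ _⟩ haverage.le
  exact ⟨_, G.isAcyclic_induce_fewLowerNeighborsFinset σ, hσ⟩
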